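/- (Intermediate claim in the proof of Theorem 1, case m ≥ 0.) Assume m ≥ 0 and W_m(n) ≠ 0 for every n ∈ ℕ₀. Then P(∂_z) : ℂ[[z]] → ℂ[[z]] is injective and its image equals z^m·ℂ[[z]], that is, the set of formal power series whose coefficients of z^0, …, z^{m−1} all vanish. -/

import Mathlib

open PowerSeries

/-- Formal differentiation `∂_z` on `ℂ[[z]]` as a `ℂ`-linear map. -/
noncomputable def dz : PowerSeries ℂ →ₗ[ℂ] PowerSeries ℂ where
  toFun u := PowerSeries.mk fun n => ((n : ℂ) + 1) * PowerSeries.coeff (n + 1) u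
  map_add' u v := by
    ext n
    simp [mul_add]
  map_smul' c u := by
    ext n
    simp
    ring

/-- The order of vanishing at `0` of a formal power series. -/
noncomputable def ordz (g : PowerSeries ℂ) : ℕ := sInf {k : ℕ | PowerSeries.coeff k g ≠ 0}

/-- The operator `P(∂_z) u = Σ_{j∈Λ} a_j · ∂_z^j u`. -/
noncomputable def Pop (Λ : Finset ℕ) (a : ℕ → PowerSeries ℂ) :
    PowerSeries ℂ →ₗ[ℂ] PowerSeries ℂ :=
  ∑ j ∈ Λ, (LinearMap.mulLeft ℂ (a j)).comp (dz ^ j)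

/-- The characteristic polynomial `W_q` evaluated at a natural number `n`:
`W_q(n) = Σ_{j∈Λ, α_j−j=q} a_{j,j+q} · n(n−1)⋯(n−j+1)`. -/
noncomputable def W (Λ : Finset ℕ) (a : ℕ → PowerSeries ℂ) (q : ℤ) (n : ℕ) : ℂ :=
  ∑ j ∈ Λ.filter (fun j => (ordz (a j) : ℤ) - j = q),
    PowerSeries.coeff (ordz (a j)) (a j) * (n.descFactorial j : ℂ)

/-!
For `m ≥ 0` every term `a_j ∂_z^j` raises the order at `0` by at least `m`, and if `u` vanishes
to order `n` then the `z^(n+m)` coefficient of `P(∂_z) u` is `W_m(n) u_n`: only the terms with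
`α_j - j = m` contribute, each with the falling factorial produced by `∂_z^j`. So `P(∂_z)` is
triangular with respect to the shift by `m`, with nonzero diagonal entries `W_m(n)`. Injectivity
follows by induction on the coefficients, and a preimage of any `f ∈ z^m ℂ[[z]]` is obtained by
solving for its coefficients one at a time.
-/

namespace PowerSeries

variable {R : Type*} [CommSemiring R]

theorem coeff_mul_eq_zero_of_lt {φ : R⟦X⟧} {p k : ℕ} (hφ : ∀ i < p, coeff i φ = 0) (hk : k < p)
    (ψ : R⟦X⟧) : coeff k (φ * ψ) = 0 := by
  rw [mul_comm]
  exact coeff_mul_of_lt_order ((Nat.cast_lt.mpr hk).trans_le (nat_le_order φ p hφ))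

theorem coeff_add_mul_of_forall_lt {φ ψ : R⟦X⟧} {p q : ℕ} (hφ : ∀ i < p, coeff i φ = 0)
    (hψ : ∀ i < q, coeff i ψ = 0) : coeff (p + q) (φ * ψ) = coeff p φ * coeff q ψ := by
  rw [coeff_mul, Finset.sum_eq_single (p, q)]
  · rintro ⟨i, k⟩ hik hne
    rw [Finset.HasAntidiagonal.mem_antidiagonal] at hik
    rcases lt_or_ge i p with hi | hi
    · rw [hφ i hi, zero_mul]
    · have hk : k < q := by
        by_contra! hk
        exact hne (Prod.ext (by omega) (by omega))
      rw [hψ k hk, mul_zero]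
  · simp

end PowerSeries

open PowerSeries

theorem coeff_of_lt_ordz {g : ℂ⟦X⟧} {k : ℕ} (hk : k < ordz g) : coeff k g = 0 :=
  not_not.mp (Nat.notMem_of_lt_sInf hk)

theorem coeff_dz (u : ℂ⟦X⟧) (n : ℕ) : coeff n (dz u) = ((n : ℂ) + 1) * coeff (n + 1) u := by
  simp [dz]

theorem coeff_dz_pow (j : ℕ) (u : ℂ⟦X⟧) (n : ℕ) :
    coeff n ((dz ^ j) u) = ((n + j).descFactorial j : ℂ) * coeff (n + j) u := by
  induction j generalizing u with
  | zero => simp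
  | succ j ih =>
    rw [pow_succ, Module.End.mul_apply, ih, coeff_dz, ← add_assoc,
      Nat.succ_descFactorial_succ]
    push_cast
    ring

theorem coeff_add_mul_dz_pow {g : ℂ⟦X⟧} {j M : ℕ} (hg : ∀ i < j + M, coeff i g = 0)
    {u : ℂ⟦X⟧} {n : ℕ} (hu : ∀ i < n, coeff i u = 0) :
    coeff (n + M) (g * (dz ^ j) u) = coeff (j + M) g * n.descFactorial j * coeff n u := by
  rcases le_or_gt j n with hjn | hnj
  · have hvanish : ∀ i < n - j, coeff i ((dz ^ j) u) = 0 := fun i hi => by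
      rw [coeff_dz_pow, hu (i + j) (by omega), mul_zero]
    rw [show n + M = j + M + (n - j) by omega, coeff_add_mul_of_forall_lt hg hvanish, coeff_dz_pow,
      Nat.sub_add_cancel hjn, mul_assoc]
  · rw [coeff_mul_eq_zero_of_lt hg (by omega), Nat.descFactorial_eq_zero_iff_lt.mpr hnj]
    simp

theorem Pop_apply (Λ : Finset ℕ) (a : ℕ → ℂ⟦X⟧) (u : ℂ⟦X⟧) :
    Pop Λ a u = ∑ j ∈ Λ, a j * (dz ^ j) u := by
  simp [Pop]

section Pop

variable {Λ : Finset ℕ} {a : ℕ → ℂ⟦X⟧} {M : ℕ}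

theorem coeff_Pop_of_lt (hM : ∀ j ∈ Λ, j + M ≤ ordz (a j)) (u : ℂ⟦X⟧) (k : ℕ) (hk : k < M) :
    coeff k (Pop Λ a u) = 0 := by
  rw [Pop_apply, map_sum]
  refine Finset.sum_eq_zero fun j hj => coeff_mul_eq_zero_of_lt (p := j + M) ?_ (by omega) _
  exact fun i hi => coeff_of_lt_ordz (hi.trans_le (hM j hj))

theorem coeff_add_Pop (hM : ∀ j ∈ Λ, j + M ≤ ordz (a j)) (u : ℂ⟦X⟧) (n : ℕ)
    (hu : ∀ k < n, coeff k u = 0) :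
    coeff (n + M) (Pop Λ a u) = W Λ a M n * coeff n u := by
  rw [Pop_apply, map_sum, W, Finset.sum_filter, Finset.sum_mul]
  refine Finset.sum_congr rfl fun j hj => ?_
  rw [coeff_add_mul_dz_pow (fun i hi => coeff_of_lt_ordz (hi.trans_le (hM j hj))) hu]
  split_ifs with hord
  · rw [show ordz (a j) = j + M by omega]
  · rw [coeff_of_lt_ordz (lt_of_le_of_ne (hM j hj) (by omega)), zero_mul, zero_mul]

end Pop

section ShiftedTriangular

variable {K : Type*} [Field K] {T : K⟦X⟧ →ₗ[K] K⟦X⟧} {M : ℕ} {w : ℕ → K}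

theorem injective_of_coeff_add_eq_mul (hT : ∀ u n, (∀ k < n, coeff k u = 0) →
      coeff (n + M) (T u) = w n * coeff n u)
    (hw : ∀ n, w n ≠ 0) : Function.Injective T := by
  refine (injective_iff_map_eq_zero T).mpr fun u hu => ?_
  ext n
  induction n using Nat.strong_induction_on with
  | _ n ih =>
    have h := hT u n ih
    rw [hu, map_zero] at h
    simpa [hw n] using h.symm

/-- `u_n` solved from `coeff (n + M) (T u) = coeff (n + M) f`, given `u_0, …, u_{n-1}`. -/
noncomputable def shiftedPreimageCoeff (T : K⟦X⟧ →ₗ[K] K⟦X⟧) (M : ℕ) (w : ℕ → K) (f : K⟦X⟧) :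
    ℕ → K
  | n => (coeff (n + M) f -
      coeff (n + M) (T (mk fun k => if k < n then shiftedPreimageCoeff T M w f k else 0))) / w n

theorem coeff_add_apply_mk_shiftedPreimageCoeff (hT : ∀ u n, (∀ k < n, coeff k u = 0) →
      coeff (n + M) (T u) = w n * coeff n u)
    (hw : ∀ n, w n ≠ 0) (f : K⟦X⟧) (n : ℕ) :
    coeff (n + M) (T (mk (shiftedPreimageCoeff T M w f))) = coeff (n + M) f := by
  set c := shiftedPreimageCoeff T M w f
  set t : K⟦X⟧ := mk fun k => if k < n then c k else 0
  have hc : c n = (coeff (n + M) f - coeff (n + M) (T t)) / w n :=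
    shiftedPreimageCoeff.eq_1 T M w f n
  have hrest : ∀ k < n, coeff k (mk c - t) = 0 := fun k hk => by simp [t, hk]
  have hrest_n : coeff n (mk c - t) = c n := by simp [t]
  calc coeff (n + M) (T (mk c))
      = coeff (n + M) (T t) + coeff (n + M) (T (mk c - t)) := by
        rw [← map_add, ← map_add, add_sub_cancel]
    _ = coeff (n + M) (T t) + w n * c n := by rw [hT _ n hrest, hrest_n]
    _ = coeff (n + M) f := by rw [hc, mul_div_cancel₀ _ (hw n), add_sub_cancel]

theorem mem_range_iff_of_coeff_add_eq_mul (hT₀ : ∀ u, ∀ k < M, coeff k (T u) = 0)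
    (hT : ∀ u n, (∀ k < n, coeff k u = 0) → coeff (n + M) (T u) = w n * coeff n u)
    (hw : ∀ n, w n ≠ 0) (f : K⟦X⟧) : f ∈ LinearMap.range T ↔ ∀ k < M, coeff k f = 0 := by
  refine ⟨fun ⟨u, hu⟩ => hu ▸ hT₀ u, fun hf => ⟨mk (shiftedPreimageCoeff T M w f), ?_⟩⟩
  ext N
  rcases lt_or_ge N M with hN | hN
  · rw [hT₀ _ N hN, hf N hN]
  · obtain ⟨n, rfl⟩ : ∃ n, N = n + M := ⟨N - M, by omega⟩
    exact coeff_add_apply_mk_shiftedPreimageCoeff hT hw f n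

end ShiftedTriangular

theorem statement2_general (Λ : Finset ℕ) (hΛ : Λ.Nonempty) (a : ℕ → PowerSeries ℂ)
    (m : ℤ) (hm : m = Λ.inf' hΛ (fun j => (ordz (a j) : ℤ) - j))
    (hm0 : 0 ≤ m)
    (hW : ∀ n : ℕ, W Λ a m n ≠ 0) :
    Function.Injective (Pop Λ a) ∧
      ∀ f : PowerSeries ℂ,
        f ∈ LinearMap.range (Pop Λ a) ↔ ∀ k : ℕ, (k : ℤ) < m → PowerSeries.coeff k f = 0 := by
  lift m to ℕ using hm0 with M
  have hM : ∀ j ∈ Λ, j + M ≤ ordz (a j) := fun j hj => by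
    have := hm ▸ Finset.inf'_le (fun j => (ordz (a j) : ℤ) - j) hj
    omega
  refine ⟨injective_of_coeff_add_eq_mul (coeff_add_Pop hM) hW, fun f => ?_⟩
  rw [mem_range_iff_of_coeff_add_eq_mul (coeff_Pop_of_lt hM) (coeff_add_Pop hM) hW]
  simp only [Nat.cast_lt]

/-- Intermediate claim in the proof of Theorem 1, case `m ≥ 0`:
if `m ≥ 0` and `W_m(n) ≠ 0` for every `n ∈ ℕ₀`, then `P(∂_z)` is injective on `ℂ[[z]]`
and its image is `z^m·ℂ[[z]]`, the set of series whose coefficients of `z^0,…,z^{m−1}` vanish. -/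
theorem statement2 (Λ : Finset ℕ) (hΛ : Λ.Nonempty) (a : ℕ → PowerSeries ℂ)
    (ha : ∀ j ∈ Λ, a j ≠ 0)
    (m : ℤ) (hm : m = Λ.inf' hΛ (fun j => (ordz (a j) : ℤ) - j))
    (hm0 : 0 ≤ m)
    (hW : ∀ n : ℕ, W Λ a m n ≠ 0) :
    Function.Injective (Pop Λ a) ∧
      ∀ f : PowerSeries ℂ,
        f ∈ LinearMap.range (Pop Λ a) ↔ ∀ k : ℕ, (k : ℤ) < m → PowerSeries.coeff k f = 0 :=
  statement2_general Λ hΛ a m hm hm0 hW
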